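/- Let n = 2m be a positive integer and let a, ξ ∈ F_{2^n} satisfy a ≠ ξ^{2^n−2}. Define f : F_{2^n} → F_{2^n} by f(x) = x^{2^n−2} if x ≠ ξ and f(ξ) = a. Then for all nonzero u, v ∈ F_{2^n}, DLCT_f(u,v) = K_n(u^{−1}v)/2 + 2·(Tr(v·((ξ+u)^{−1} + ξ^{−1})) − Tr(v·((ξ+u)^{−1} + a)) − Tr(u^{−1}v)), where the trace values are viewed as integers in {0,1} and the convention 0^{−1} = 0 is used. -/

import Mathlib

open scoped BigOperators Classical

noncomputable instance (p n : ℕ) [Fact p.Prime] : Fintype (GaloisField p n) :=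
  Fintype.ofFinite _

/-- The absolute trace map from `F_{2^n}` to `F_2`. -/
noncomputable def trF2 (n : ℕ) (x : GaloisField 2 n) : ZMod 2 :=
  Algebra.trace (ZMod 2) (GaloisField 2 n) x

/-- The binary Kloosterman sum `K_m(γ) = Σ_x (-1)^{Tr(γx + x⁻¹)}` (with `0⁻¹ = 0`). -/
noncomputable def kloo (m : ℕ) (γ : GaloisField 2 m) : ℤ :=
  ∑ x : GaloisField 2 m, (-1 : ℤ) ^ (trF2 m (γ * x + x⁻¹)).val

/-- The DLCT entry of `F : F_{2^n} → F_{2^n}` at `(u,v)`. -/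
noncomputable def dlct (n : ℕ) (F : GaloisField 2 n → GaloisField 2 n)
    (u v : GaloisField 2 n) : ℤ :=
  (Nat.card {x : GaloisField 2 n // trF2 n (v * (F (x + u) + F x)) = 0} : ℤ) - 2 ^ (n - 1)

/-- The differential-linear uniformity of `F`: the max of `|DLCT_F(u,v)|` over nonzero `u, v`. -/
noncomputable def dlu (n : ℕ) (F : GaloisField 2 n → GaloisField 2 n) : ℕ :=
  Finset.sup
    (Finset.univ.filter fun p : GaloisField 2 n × GaloisField 2 n => p.1 ≠ 0 ∧ p.2 ≠ 0)
    (fun p => (dlct n F p.1 p.2).natAbs)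

/-!
Away from `ξ` and `ξ + u` the derivative `f(x + u) + f(x)` is that of the inverse function, so the
character sum `∑ₓ (-1)^Tr(v(f(x+u)+f(x)))`, which is `2·DLCT_f(u,v)`, differs from the one of
the inverse function only by the two terms at `ξ` and `ξ + u`. For the inverse function, scaling
`x = u y` and substituting `y = (r + 1)⁻¹` turns `v((x + u)⁻¹ + x⁻¹)` into `c(r + r⁻¹)` with
`c = u⁻¹v`, except at two points; then `r ↦ c r` and the Frobenius invariance `K(c²) = K(c)`
identify `∑ᵣ (-1)^Tr(c(r + r⁻¹))` with the Kloosterman sum `K(c)`.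
-/

open Finset

theorem FiniteField.pow_card_sub_two_eq_inv {K : Type*} [Field K] [Fintype K]
    (hK : 2 < Fintype.card K) (x : K) : x ^ (Fintype.card K - 2) = x⁻¹ := by
  rcases eq_or_ne x 0 with rfl | hx
  · rw [zero_pow (by omega), inv_zero]
  · refine eq_inv_of_mul_eq_one_left ?_
    rw [← pow_succ, show Fintype.card K - 2 + 1 = Fintype.card K - 1 by omega,
      FiniteField.pow_card_sub_one_eq_one x hx]

theorem Algebra.trace_pow_card_eq_trace {K L : Type*} [Field K] [Fintype K] [Field L]
    [Algebra K L] [Algebra.IsAlgebraic K L] (x : L) :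
    Algebra.trace K L (x ^ Fintype.card K) = Algebra.trace K L x :=
  Algebra.trace_eq_of_algEquiv (FiniteField.frobeniusAlgEquivOfAlgebraic K L) x

theorem two_mul_card_zeros_eq_card_add_sum_sign {ι : Type*} [Fintype ι] (s : ι → ZMod 2) :
    2 * (Nat.card {x // s x = 0} : ℤ) = Fintype.card ι + ∑ x, (-1 : ℤ) ^ (s x).val := by
  have hsign : ∀ x, (-1 : ℤ) ^ (s x).val = 2 * (if s x = 0 then 1 else 0) - 1 := fun x => by
    generalize s x = t; revert t; decide
  rw [Fintype.sum_congr _ _ hsign, sum_sub_distrib, ← mul_sum, sum_boole,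
    Nat.card_eq_fintype_card, Fintype.card_subtype]
  simp

theorem sum_eq_sum_add_of_eq_off_pair {ι M : Type*} [Fintype ι] [DecidableEq ι]
    [AddCommGroup M] {g h : ι → M} {a b : ι} (hab : a ≠ b)
    (hgh : ∀ x, x ≠ a → x ≠ b → g x = h x) :
    ∑ x, g x = ∑ x, h x + (g a - h a) + (g b - h b) := by
  have hdiff : ∑ x, (g x - h x) = (g a - h a) + (g b - h b) := by
    rw [← sum_pair (f := fun x => g x - h x) hab]
    refine (sum_subset (subset_univ _) fun x _ hx => ?_).symm
    simp only [mem_insert, mem_singleton, not_or] at hx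
    rw [hgh x hx.1 hx.2, sub_self]
  rw [add_assoc, ← hdiff, sum_sub_distrib, add_sub_cancel]

noncomputable def trSign (n : ℕ) (z : GaloisField 2 n) : ℤ := (-1) ^ (trF2 n z).val

section
variable {n : ℕ}
local notation "𝔽" => GaloisField 2 n

theorem card_galoisField_two (hn : n ≠ 0) : Fintype.card 𝔽 = 2 ^ n := by
  rw [← Nat.card_eq_fintype_card, GaloisField.card 2 n hn]

theorem trSign_zero : trSign n 0 = 1 := by
  simp [trSign, trF2]

theorem trSign_eq_one_sub_two_mul (z : 𝔽) : trSign n z = 1 - 2 * ((trF2 n z).val : ℤ) := by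
  unfold trSign; generalize trF2 n z = t; revert t; decide

theorem trF2_sq (z : 𝔽) : trF2 n (z ^ 2) = trF2 n z := by
  simpa [trF2] using Algebra.trace_pow_card_eq_trace (K := ZMod 2) z

theorem kloo_sq (c : 𝔽) : kloo n (c ^ 2) = kloo n c := by
  refine (Fintype.sum_bijective (· ^ 2) (frobeniusEquiv 𝔽 2).bijective _ _ fun x => ?_).symm
  rw [← mul_pow, ← inv_pow, ← CharTwo.add_sq, trF2_sq]

theorem kloo_eq_sum_trSign_mul_add_inv {c : 𝔽} (hc : c ≠ 0) :
    kloo n c = ∑ r, trSign n (c * (r + r⁻¹)) := by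
  rw [← kloo_sq]
  refine Fintype.sum_bijective (c * ·) (mulLeft_bijective₀ c hc) _ _ fun x => ?_
  simp only [trSign, mul_inv, mul_add]
  field_simp

theorem sum_trSign_inv_derivative {u v : 𝔽} (hu : u ≠ 0) (hv : v ≠ 0) :
    ∑ x, trSign n (v * ((x + u)⁻¹ + x⁻¹))
      = kloo n (u⁻¹ * v) + 2 * trSign n (u⁻¹ * v) - 2 := by
  set c := u⁻¹ * v
  have hscale : ∑ y, trSign n (c * ((y + 1)⁻¹ + y⁻¹))
      = ∑ x, trSign n (v * ((x + u)⁻¹ + x⁻¹)) := by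
    refine Fintype.sum_bijective (u * ·) (mulLeft_bijective₀ u hu) _ _ fun y => ?_
    rw [← mul_add_one, mul_inv, mul_inv, ← mul_add, ← mul_assoc, mul_comm v]
  have hinvert : ∑ r, trSign n (c * (((r + 1)⁻¹ + 1)⁻¹ + (r + 1)))
      = ∑ y, trSign n (c * ((y + 1)⁻¹ + y⁻¹)) := by
    refine Fintype.sum_bijective (fun r => (r + 1)⁻¹)
      (inv_involutive.bijective.comp (add_left_injective 1).bijective_of_finite) _ _ fun r => ?_
    rw [inv_inv]
  have hcorr := sum_eq_sum_add_of_eq_off_pair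
    (g := fun r => trSign n (c * (((r + 1)⁻¹ + 1)⁻¹ + (r + 1))))
    (h := fun r => trSign n (c * (r + r⁻¹))) zero_ne_one fun r hr0 hr1 => by
      have hr1' : r + 1 ≠ 0 := fun h => hr1 (CharTwo.add_eq_zero.mp h)
      have hsum : (r + 1)⁻¹ + 1 = r / (r + 1) := by
        field_simp
        linear_combination (CharTwo.two_eq_zero : (2 : 𝔽) = 0)
      rw [hsum, inv_div]
      congr 2
      field_simp
      linear_combination r * (CharTwo.two_eq_zero : (2 : 𝔽) = 0)
  simp only [zero_add, inv_one, CharTwo.add_self_eq_zero, inv_zero, add_zero, mul_one, mul_zero,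
    trSign_zero] at hcorr
  rw [← hscale, ← hinvert, hcorr,
    ← kloo_eq_sum_trSign_mul_add_inv (mul_ne_zero (inv_ne_zero hu) hv)]
  ring

theorem sum_trSign_derivative_of_eq_off {f g : 𝔽 → 𝔽} {ξ : 𝔽} (hfg : ∀ x, x ≠ ξ → f x = g x)
    {u : 𝔽} (hu : u ≠ 0) (v : 𝔽) :
    ∑ x, trSign n (v * (f (x + u) + f x)) = ∑ x, trSign n (v * (g (x + u) + g x))
      + 2 * trSign n (v * (g (ξ + u) + f ξ)) - 2 * trSign n (v * (g (ξ + u) + g ξ)) := by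
  have hξu : ξ + u + u = ξ := by rw [add_assoc, CharTwo.add_self_eq_zero, add_zero]
  have hne : ξ ≠ ξ + u := fun h => hu (by simpa using h)
  rw [sum_eq_sum_add_of_eq_off_pair (h := fun x => trSign n (v * (g (x + u) + g x))) hne
      fun x hx hxu => ?_,
    hξu, hfg (ξ + u) hne.symm, add_comm (f ξ), add_comm (g ξ)]
  · ring
  · have hxu' : x + u ≠ ξ := fun h => hxu <| by
      rw [← h, add_assoc, CharTwo.add_self_eq_zero, add_zero]
    rw [hfg x hx, hfg (x + u) hxu']

theorem two_mul_dlct (hn : n ≠ 0) (F : 𝔽 → 𝔽) (u v : 𝔽) :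
    2 * dlct n F u v = ∑ x, trSign n (v * (F (x + u) + F x)) := by
  have hpow : (2 : ℤ) ^ n = 2 * 2 ^ (n - 1) := by
    rw [← pow_succ', Nat.sub_add_cancel (Nat.pos_of_ne_zero hn)]
  rw [dlct, mul_sub, two_mul_card_zeros_eq_card_add_sum_sign, card_galoisField_two hn]
  push_cast
  rw [hpow]
  simp only [trSign]
  ring
end

theorem stmt11_general (m : ℕ) (hm : 0 < m)
    (a ξ : GaloisField 2 (2 * m))
    (f : GaloisField 2 (2 * m) → GaloisField 2 (2 * m))
    (hf : ∀ x : GaloisField 2 (2 * m), x ≠ ξ → f x = x ^ (2 ^ (2 * m) - 2))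
    (hfξ : f ξ = a)
    (u v : GaloisField 2 (2 * m)) (hu : u ≠ 0) (hv : v ≠ 0) :
    dlct (2 * m) f u v =
      kloo (2 * m) (u⁻¹ * v) / 2 +
        2 * (((trF2 (2 * m) (v * ((ξ + u)⁻¹ + ξ⁻¹))).val : ℤ) -
              ((trF2 (2 * m) (v * ((ξ + u)⁻¹ + a))).val : ℤ) -
              ((trF2 (2 * m) (u⁻¹ * v)).val : ℤ)) := by
  have hcard := card_galoisField_two (n := 2 * m) (by omega)
  have hq : 2 < Fintype.card (GaloisField 2 (2 * m)) := by
    have : 2 ^ 2 ≤ 2 ^ (2 * m) := Nat.pow_le_pow_right two_pos (by omega)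
    omega
  have hf_inv : ∀ x, x ≠ ξ → f x = x⁻¹ := fun x hx => by
    rw [hf x hx, ← hcard, FiniteField.pow_card_sub_two_eq_inv hq]
  have h := two_mul_dlct (by omega) f u v
  rw [sum_trSign_derivative_of_eq_off hf_inv hu, sum_trSign_inv_derivative hu hv, hfξ,
    trSign_eq_one_sub_two_mul, trSign_eq_one_sub_two_mul, trSign_eq_one_sub_two_mul] at h
  omega

/-- Theorem: for `n = 2m`, `a ≠ ξ^{2^n-2}`, and `f` equal to the inverse function
`x ↦ x^{2^n-2}` except `f(ξ) = a`, for all nonzero `u, v`: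
`DLCT_f(u,v) = K_n(u⁻¹v)/2 + 2(Tr(v((ξ+u)⁻¹+ξ⁻¹)) - Tr(v((ξ+u)⁻¹+a)) - Tr(u⁻¹v))`. -/
theorem stmt11 (m : ℕ) (hm : 0 < m)
    (a ξ : GaloisField 2 (2 * m)) (ha : a ≠ ξ ^ (2 ^ (2 * m) - 2))
    (f : GaloisField 2 (2 * m) → GaloisField 2 (2 * m))
    (hf : ∀ x : GaloisField 2 (2 * m), x ≠ ξ → f x = x ^ (2 ^ (2 * m) - 2))
    (hfξ : f ξ = a)
    (u v : GaloisField 2 (2 * m)) (hu : u ≠ 0) (hv : v ≠ 0) :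
    dlct (2 * m) f u v =
      kloo (2 * m) (u⁻¹ * v) / 2 +
        2 * (((trF2 (2 * m) (v * ((ξ + u)⁻¹ + ξ⁻¹))).val : ℤ) -
              ((trF2 (2 * m) (v * ((ξ + u)⁻¹ + a))).val : ℤ) -
              ((trF2 (2 * m) (u⁻¹ * v)).val : ℤ)) :=
  stmt11_general m hm a ξ f hf hfξ u v hu hv
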